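/- arXiv:2310.09196 — 3 statements merged into one kernel-verified Lean document; each statement's English description precedes it below -/
import Mathlib

section
/- Let V be a finite set, G a simple graph on V with closed neighborhoods N_v. If Π and Π' are two partitions of V and v ∈ V satisfies |N_v| > 4·φ(Π) and |N_v| > 4·φ(Π'), then [v]_Π = [v]_{Π'}, i.e. the cluster of v is uniquely determined. -/
open scoped symmDiff

open Finset

variable {V : Type*} [Fintype V] [DecidableEq V]

/-- Closed neighborhood of `v`: `v` together with its adjacent vertices. -/
def nbhd (G : SimpleGraph V) [DecidableRel G.Adj] (v : V) : Finset V :=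
  insert v (G.neighborFinset v)

/-- `P` encodes a partition of `V`, where `P v` is the block containing `v`. -/
def IsPartitionFun (P : V → Finset V) : Prop :=
  (∀ v, v ∈ P v) ∧ ∀ u v : V, u ∈ P v → P u = P v

/-- Maximum disagreement of the partition `P`. -/
def phi (G : SimpleGraph V) [DecidableRel G.Adj] (P : V → Finset V) : ℕ :=
  Finset.univ.sup fun v => ((P v) ∆ (nbhd G v)).card

/-!
If `x ∈ [v]_Π \ [v]_Π'`, then `N_v` lies, up to `φ(Π) + φ(Π')` elements, in `[v]_Π ∩ [v]_Π'`.
That intersection is contained in `[x]_Π = [v]_Π` and is disjoint from `[x]_Π'`, so comparing it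
with `N_x` shows it has at most `φ(Π) + φ(Π')` elements. Hence `|N_v| ≤ 2 φ(Π) + 2 φ(Π')`.
-/

namespace Finset

variable {α : Type*} [DecidableEq α]

lemma card_le_card_symmDiff_add_card_symmDiff_add_card_inter (N A B : Finset α) :
    #N ≤ #(A ∆ N) + #(B ∆ N) + #(A ∩ B) := by
  have hcover : N ⊆ (N \ A ∪ N \ B) ∪ A ∩ B := fun a ha => by
    simp only [mem_union, mem_sdiff, mem_inter]
    tauto
  calc #N ≤ #(N \ A) + #(N \ B) + #(A ∩ B) :=
        (card_le_card hcover).trans <|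
          (card_union_le _ _).trans (Nat.add_le_add_right (card_union_le _ _) _)
    _ ≤ #(A ∆ N) + #(B ∆ N) + #(A ∩ B) := by
      gcongr <;> exact symmDiff_subset_sdiff'

lemma card_inter_le_card_symmDiff_add_card_symmDiff {A B C : Finset α} (M : Finset α)
    (hBC : Disjoint B C) : #(A ∩ B) ≤ #(A ∆ M) + #(C ∆ M) := by
  have hcover : A ∩ B ⊆ A \ M ∪ M \ C := fun a ha => by
    rw [mem_inter] at ha
    rw [mem_union, mem_sdiff, mem_sdiff]
    by_cases haM : a ∈ M
    · exact Or.inr ⟨haM, disjoint_left.mp hBC ha.2⟩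
    · exact Or.inl ⟨ha.1, haM⟩
  calc #(A ∩ B) ≤ #(A \ M) + #(M \ C) := (card_le_card hcover).trans (card_union_le _ _)
    _ ≤ #(A ∆ M) + #(C ∆ M) := by
      gcongr
      · exact symmDiff_subset_sdiff
      · exact symmDiff_subset_sdiff'

end Finset

lemma IsPartitionFun.disjoint_of_notMem {α : Type*} {P : α → Finset α} (hP : IsPartitionFun P)
    {u v : α} (h : u ∉ P v) : Disjoint (P u) (P v) := by
  refine Finset.disjoint_left.mpr fun a hau hav => h ?_
  rw [← (hP.2 a u hau).symm.trans (hP.2 a v hav)]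
  exact hP.1 u

lemma card_symmDiff_nbhd_le_phi (G : SimpleGraph V) [DecidableRel G.Adj] (P : V → Finset V)
    (u : V) : #(P u ∆ nbhd G u) ≤ phi G P :=
  Finset.le_sup (f := fun v => #(P v ∆ nbhd G v)) (mem_univ u)

lemma mem_of_mem_of_four_mul_phi_lt (G : SimpleGraph V) [DecidableRel G.Adj]
    {P P' : V → Finset V} (hP : IsPartitionFun P) (hP' : IsPartitionFun P') {v x : V}
    (hv : 4 * phi G P < #(nbhd G v)) (hv' : 4 * phi G P' < #(nbhd G v)) (hx : x ∈ P v) :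
    x ∈ P' v := by
  by_contra hx'
  have hcover := card_le_card_symmDiff_add_card_symmDiff_add_card_inter (nbhd G v) (P v) (P' v)
  have hinter : #(P v ∩ P' v) ≤ #(P x ∆ nbhd G x) + #(P' x ∆ nbhd G x) := by
    rw [hP.2 x v hx]
    exact card_inter_le_card_symmDiff_add_card_symmDiff _ (hP'.disjoint_of_notMem hx').symm
  have := card_symmDiff_nbhd_le_phi G P v
  have := card_symmDiff_nbhd_le_phi G P' v
  have := card_symmDiff_nbhd_le_phi G P x
  have := card_symmDiff_nbhd_le_phi G P' x
  omega

theorem statement7 (G : SimpleGraph V) [DecidableRel G.Adj]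
    (P P' : V → Finset V) (hP : IsPartitionFun P) (hP' : IsPartitionFun P') (v : V)
    (hv : 4 * phi G P < (nbhd G v).card) (hv' : 4 * phi G P' < (nbhd G v).card) :
    P v = P' v :=
  Finset.ext fun _ =>
    ⟨mem_of_mem_of_four_mul_phi_lt G hP hP' hv hv', mem_of_mem_of_four_mul_phi_lt G hP' hP hv' hv⟩
end

section
/- Let V be a finite set, G a simple graph on V, and d ∈ ℕ. With Π_d and U^d_C as in the combinatorial lower bound construction, suppose there exists a vertex v ∈ V with |N_v \ U^d_{[v]_{Π_d}}| + |[v]_{Π_d} \ N_v| > d. Then there is no partition Π of V with maximum disagreement φ(Π) ≤ d. -/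
open scoped symmDiff

open Finset

variable {V : Type*} [Fintype V] [DecidableEq V]

/-- Auxiliary graph `G_d`: edges are pairs whose closed neighborhoods intersect
in more than `2 * d` vertices. -/
def Gd (G : SimpleGraph V) [DecidableRel G.Adj] (d : ℕ) : SimpleGraph V :=
  SimpleGraph.fromRel fun u v => 2 * d < (nbhd G u ∩ nbhd G v).card

/-- The block of `v` in the partition of `V` into connected components of `G_d`. -/
def compBlock (G : SimpleGraph V) [DecidableRel G.Adj] (d : ℕ)
    [DecidableRel (Gd G d).Reachable] (v : V) : Finset V :=
  Finset.univ.filter fun u => (Gd G d).Reachable u v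

/-- The set `U^d_C` for the component `C` of `v`. -/
def Ud (G : SimpleGraph V) [DecidableRel G.Adj] (d : ℕ)
    [DecidableRel (Gd G d).Reachable] (v : V) : Finset V :=
  Finset.univ.filter fun x =>
    ∀ w ∈ compBlock G d x, ∀ u ∈ compBlock G d v, ((nbhd G w) ∆ (nbhd G u)).card ≤ 2 * d

/- A partition `P` with `φ(P) ≤ d` must merge every edge of `G_d`: two distinct (hence disjoint)
blocks can cover at most `d + d` vertices of `N_u ∩ N_w`. So each `Π_d`-component lies inside a
block of `P`, which puts `[v]_{Π_d} ⊆ P v`; and every block, having all its closed neighbourhoods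
within `d` of it, lies inside `U^d`, which puts `P v ⊆ U^d_{[v]}`. Hence the quantity in the
hypothesis is at most `|N_v \ P v| + |P v \ N_v| = |P v ∆ N_v| ≤ d`. -/

namespace Finset

theorem card_symmDiff {α : Type*} [DecidableEq α] (s t : Finset α) :
    #(s ∆ t) = #(s \ t) + #(t \ s) := by
  rw [symmDiff_def, sup_eq_union, card_union_of_disjoint disjoint_sdiff_sdiff]

theorem card_symmDiff_triangle {α : Type*} [DecidableEq α] (s t u : Finset α) :
    #(s ∆ u) ≤ #(s ∆ t) + #(t ∆ u) :=
  (card_le_card (symmDiff_triangle s t u)).trans (card_union_le _ _)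

theorem card_inter_le_of_disjoint {α : Type*} [DecidableEq α] {a b : Finset α}
    (hab : Disjoint a b) (s t : Finset α) : #(s ∩ t) ≤ #(s \ a) + #(t \ b) := by
  refine (card_le_card fun x hx => ?_).trans (card_union_le _ _)
  rw [mem_inter] at hx
  by_cases hxa : x ∈ a
  · exact mem_union_right _ (mem_sdiff.2 ⟨hx.2, disjoint_left.1 hab hxa⟩)
  · exact mem_union_left _ (mem_sdiff.2 ⟨hx.1, hxa⟩)

end Finset

namespace IsPartitionFun

variable {α : Type*} {P : α → Finset α}

theorem eq_of_mem_of_mem (hP : IsPartitionFun P) {x u w : α} (hu : x ∈ P u) (hw : x ∈ P w) :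
    P u = P w :=
  (hP.2 x u hu).symm.trans (hP.2 x w hw)

theorem disjoint_of_ne (hP : IsPartitionFun P) {u w : α} (h : P u ≠ P w) :
    Disjoint (P u) (P w) :=
  disjoint_left.2 fun _ hu hw => h (hP.eq_of_mem_of_mem hu hw)

end IsPartitionFun

section DisagreementBound

variable {G : SimpleGraph V} [DecidableRel G.Adj] {d : ℕ} {P : V → Finset V}

theorem card_symmDiff_nbhd_le (hφ : phi G P ≤ d) (v : V) : #(P v ∆ nbhd G v) ≤ d :=
  (le_sup (f := fun v => #(P v ∆ nbhd G v)) (mem_univ v)).trans hφ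

theorem card_nbhd_sdiff_le (hφ : phi G P ≤ d) (v : V) : #(nbhd G v \ P v) ≤ d :=
  (card_le_card fun _ hx => mem_symmDiff.2 (Or.inr (mem_sdiff.1 hx))).trans
    (card_symmDiff_nbhd_le hφ v)

theorem card_symmDiff_nbhd_nbhd_le (hφ : phi G P ≤ d) {u w : V} (h : P u = P w) :
    #(nbhd G u ∆ nbhd G w) ≤ 2 * d := by
  calc #(nbhd G u ∆ nbhd G w) ≤ #(nbhd G u ∆ P u) + #(P w ∆ nbhd G w) := by
        rw [h]; exact card_symmDiff_triangle _ _ _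
    _ ≤ d + d := by
        rw [symmDiff_comm]
        exact Nat.add_le_add (card_symmDiff_nbhd_le hφ u) (card_symmDiff_nbhd_le hφ w)
    _ = 2 * d := (two_mul d).symm

theorem IsPartitionFun.eq_of_gd_adj (hP : IsPartitionFun P) (hφ : phi G P ≤ d) {u w : V}
    (huw : (Gd G d).Adj u w) : P u = P w := by
  by_contra hne
  have hle : #(nbhd G u ∩ nbhd G w) ≤ 2 * d := calc
    #(nbhd G u ∩ nbhd G w) ≤ #(nbhd G u \ P u) + #(nbhd G w \ P w) :=
      card_inter_le_of_disjoint (hP.disjoint_of_ne hne) _ _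
    _ ≤ d + d := Nat.add_le_add (card_nbhd_sdiff_le hφ u) (card_nbhd_sdiff_le hφ w)
    _ = 2 * d := (two_mul d).symm
  rcases huw with ⟨-, hlt | hlt⟩
  · exact hle.not_gt hlt
  · exact hle.not_gt (inter_comm (nbhd G u) _ ▸ hlt)

theorem IsPartitionFun.eq_of_gd_reachable (hP : IsPartitionFun P) (hφ : phi G P ≤ d)
    {u w : V} (huw : (Gd G d).Reachable u w) : P u = P w := by
  obtain ⟨p⟩ := huw
  induction p with
  | nil => rfl
  | cons hadj _ ih => exact (hP.eq_of_gd_adj hφ hadj).trans ih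

variable [DecidableRel (Gd G d).Reachable]

theorem IsPartitionFun.compBlock_subset (hP : IsPartitionFun P) (hφ : phi G P ≤ d) (v : V) :
    compBlock G d v ⊆ P v := fun u hu =>
  hP.eq_of_gd_reachable hφ (mem_filter.1 hu).2 ▸ hP.1 u

theorem IsPartitionFun.subset_Ud (hP : IsPartitionFun P) (hφ : phi G P ≤ d) (v : V) :
    P v ⊆ Ud G d v := fun x hx =>
  mem_filter.2 ⟨mem_univ x, fun _ hw _ hu => card_symmDiff_nbhd_nbhd_le hφ <|
    (hP.eq_of_gd_reachable hφ (mem_filter.1 hw).2).trans <|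
      (hP.2 x v hx).trans (hP.eq_of_gd_reachable hφ (mem_filter.1 hu).2).symm⟩

end DisagreementBound

theorem statement11 (G : SimpleGraph V) [DecidableRel G.Adj] (d : ℕ)
    [DecidableRel (Gd G d).Reachable]
    (h : ∃ v : V, d < (nbhd G v \ Ud G d v).card + (compBlock G d v \ nbhd G v).card) :
    ¬ ∃ P : V → Finset V, IsPartitionFun P ∧ phi G P ≤ d := by
  rintro ⟨P, hP, hφ⟩
  obtain ⟨v, hv⟩ := h
  have hle : #(nbhd G v \ Ud G d v) + #(compBlock G d v \ nbhd G v) ≤ d := calc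
    _ ≤ #(nbhd G v \ P v) + #(P v \ nbhd G v) :=
      Nat.add_le_add (card_le_card (sdiff_subset_sdiff le_rfl (hP.subset_Ud hφ v)))
        (card_le_card (sdiff_subset_sdiff (hP.compBlock_subset hφ v) le_rfl))
    _ = #(P v ∆ nbhd G v) := by rw [card_symmDiff, add_comm]
    _ ≤ d := card_symmDiff_nbhd_le hφ v
  exact hle.not_gt hv
end

section
/- Let V be a finite set, G a simple graph on V with closed neighborhoods N_v, and fix two distinct vertices v, v' ∈ V such that the sets C = {u : 2·|N_u ∩ N_v| > |N_v|} and C' = {u : 2·|N_u ∩ N_{v'}| > |N_{v'}|} satisfy C ≠ C' and C ∩ C' ≠ ∅. Then every partition Π of V satisfies 4·φ(Π) ≥ min(|N_v|, |N_{v'}|). -/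
open scoped symmDiff

open Finset

variable {V : Type*} [Fintype V] [DecidableEq V]

/-!
If `4 φ(Π) < |N_v|`, the block of `v` is exactly the candidate cluster of `v`: a vertex `u`
in the block of `v` misses at most `2 φ(Π)` elements of `N_v` (those outside `[v]_Π` plus those
of `[u]_Π = [v]_Π` outside `N_u`), while a vertex outside it shares at most `2 φ(Π)` elements
with `N_v`, since each common neighbour lies outside `[u]_Π` or outside `[v]_Π`. So if both
`|N_v|` and `|N_{v'}|` exceeded `4 φ(Π)`, the blocks `[v]_Π = C` and `[v']_Π = C'` would be
distinct yet intersect.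
-/

namespace IsPartitionFun

variable {α : Type*} {P : α → Finset α}

theorem block_eq_of_mem_of_mem (hP : IsPartitionFun P) {u v w : α} (hu : w ∈ P u)
    (hv : w ∈ P v) : P u = P v :=
  (hP.2 w u hu).symm.trans (hP.2 w v hv)

theorem disjoint_of_notMem_s14 (hP : IsPartitionFun P) {u v : α} (h : u ∉ P v) :
    Disjoint (P u) (P v) :=
  disjoint_left.2 fun _ hu hv ↦ h (hP.block_eq_of_mem_of_mem hu hv ▸ hP.1 u)

end IsPartitionFun

section Disagreement

variable (G : SimpleGraph V) [DecidableRel G.Adj] {P : V → Finset V}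

def candidateCluster (w : V) : Finset V :=
  univ.filter fun u => (nbhd G w).card < 2 * (nbhd G u ∩ nbhd G w).card

theorem card_symmDiff_le_phi (P : V → Finset V) (u : V) :
    ((P u) ∆ (nbhd G u)).card ≤ phi G P :=
  le_sup (f := fun w => ((P w) ∆ (nbhd G w)).card) (mem_univ u)

theorem card_nbhd_sdiff_le_of_mem (hP : IsPartitionFun P) {u v : V} (hu : u ∈ P v) :
    (nbhd G v \ nbhd G u).card ≤ 2 * phi G P := by
  have hcover : nbhd G v \ nbhd G u ⊆ (P v ∆ nbhd G v) ∪ (P u ∆ nbhd G u) := by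
    rw [hP.2 u v hu]
    exact (sdiff_triangle _ (P v) _).trans
      (union_subset_union symmDiff_subset_sdiff' symmDiff_subset_sdiff)
  calc (nbhd G v \ nbhd G u).card
      ≤ (P v ∆ nbhd G v).card + (P u ∆ nbhd G u).card :=
        (card_le_card hcover).trans (card_union_le _ _)
    _ ≤ 2 * phi G P := by
        linarith [card_symmDiff_le_phi G P u, card_symmDiff_le_phi G P v]

theorem card_nbhd_inter_le_of_notMem (hP : IsPartitionFun P) {u v : V} (hu : u ∉ P v) :
    (nbhd G u ∩ nbhd G v).card ≤ 2 * phi G P := by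
  have hdisj := hP.disjoint_of_notMem_s14 hu
  have hcover : nbhd G u ∩ nbhd G v ⊆ (P u ∆ nbhd G u) ∪ (P v ∆ nbhd G v) := by
    intro x hx
    rw [mem_inter] at hx
    by_cases hxu : x ∈ P u
    · exact mem_union_right _ (symmDiff_subset_sdiff' (mem_sdiff.2
        ⟨hx.2, disjoint_left.1 hdisj hxu⟩))
    · exact mem_union_left _ (symmDiff_subset_sdiff' (mem_sdiff.2 ⟨hx.1, hxu⟩))
  calc (nbhd G u ∩ nbhd G v).card
      ≤ (P u ∆ nbhd G u).card + (P v ∆ nbhd G v).card :=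
        (card_le_card hcover).trans (card_union_le _ _)
    _ ≤ 2 * phi G P := by
        linarith [card_symmDiff_le_phi G P u, card_symmDiff_le_phi G P v]

theorem block_eq_candidateCluster (hP : IsPartitionFun P) {v : V}
    (hv : 4 * phi G P < (nbhd G v).card) : P v = candidateCluster G v := by
  ext u
  simp only [candidateCluster, mem_filter, mem_univ, true_and]
  constructor
  · intro hu
    have hsplit := card_inter_add_card_sdiff (nbhd G v) (nbhd G u)
    rw [inter_comm] at hsplit
    have := card_nbhd_sdiff_le_of_mem G hP hu
    omega
  · intro hu
    by_contra hnu
    have := card_nbhd_inter_le_of_notMem G hP hnu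
    omega

end Disagreement

theorem statement14_general (G : SimpleGraph V) [DecidableRel G.Adj] (v v' : V)
    (C C' : Finset V)
    (hC : C = Finset.univ.filter fun u => (nbhd G v).card < 2 * (nbhd G u ∩ nbhd G v).card)
    (hC' : C' = Finset.univ.filter fun u => (nbhd G v').card < 2 * (nbhd G u ∩ nbhd G v').card)
    (hne : C ≠ C') (hinter : (C ∩ C').Nonempty)
    (P : V → Finset V) (hP : IsPartitionFun P) :
    min (nbhd G v).card (nbhd G v').card ≤ 4 * phi G P := by
  by_contra! h
  rw [lt_min_iff] at h
  have hv : P v = C := by rw [hC]; exact block_eq_candidateCluster G hP h.1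
  have hv' : P v' = C' := by rw [hC']; exact block_eq_candidateCluster G hP h.2
  obtain ⟨w, hw⟩ := hinter
  rw [mem_inter, ← hv, ← hv'] at hw
  exact hne (hv.symm.trans ((hP.block_eq_of_mem_of_mem hw.1 hw.2).trans hv'))

theorem statement14 (G : SimpleGraph V) [DecidableRel G.Adj] (v v' : V) (hvv' : v ≠ v')
    (C C' : Finset V)
    (hC : C = Finset.univ.filter fun u => (nbhd G v).card < 2 * (nbhd G u ∩ nbhd G v).card)
    (hC' : C' = Finset.univ.filter fun u => (nbhd G v').card < 2 * (nbhd G u ∩ nbhd G v').card)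
    (hne : C ≠ C') (hinter : (C ∩ C').Nonempty)
    (P : V → Finset V) (hP : IsPartitionFun P) :
    min (nbhd G v).card (nbhd G v').card ≤ 4 * phi G P :=
  statement14_general G v v' C C' hC hC' hne hinter P hP
end
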